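/- For any three-player impartial game G and any Nim heaps of sizes m, n ≥ 2, the game G + m + n is a Q-game. In particular, any Nim position containing two heaps each of size at least 2 is a Q-game. -/
import Mathlib


/-- Three-player impartial games: well-founded game trees. -/
inductive G3 : Type 1 where
  | mk : (ι : Type) → (ι → G3) → G3

namespace G3

/-- The index type of options (moves) of a game. -/
def moves : G3 → Type
  | mk ι _ => ι

/-- The option of a game corresponding to a move. -/
def moveFn : (g : G3) → moves g → G3
  | mk _ f => f

/-- Disjunctive sum: move in exactly one component. -/
noncomputable def add : G3 → G3 → G3 :=
  G3.rec (fun ι f ihf =>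
    G3.rec (fun κ g ihg =>
      mk (ι ⊕ κ) (fun x =>
        match x with
        | Sum.inl i => ihf i (mk κ g)
        | Sum.inr j => ihg j)))

/-- The four outcome types of a three-player impartial game. -/
inductive PType : Type
  | N | O | P | Q
deriving DecidableEq

open Classical in
/-- The type of a game: `N` iff some option is a `P`-game; `O` iff it has at least
one option and all options are `N`-games; `P` iff all options are `O`-games;
`Q` otherwise. -/
noncomputable def typ : G3 → PType
  | mk ι f =>
    if ∃ i, typ (f i) = PType.P then PType.N
    else if Nonempty ι ∧ ∀ i, typ (f i) = PType.N then PType.O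
    else if ∀ i, typ (f i) = PType.O then PType.P
    else PType.Q

/-- The Nim heap of size `n`: options are heaps of sizes `0, …, n-1`. -/
def nim : ℕ → G3
  | n => mk (Fin n) (fun i => nim i)
termination_by n => n
decreasing_by exact i.isLt

/-- The sum of `n` Nim heaps of size 1. -/
noncomputable def ones : ℕ → G3
  | 0 => nim 0
  | n + 1 => add (ones n) (nim 1)


lemma nim_def (n : ℕ) : nim n = mk (Fin n) (fun i => nim i) := by rw [nim]

lemma add_mk {ι} (f : ι → G3) {κ} (g : κ → G3) :
    add (mk ι f) (mk κ g) = mk (ι ⊕ κ) (fun x =>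
      match x with
      | Sum.inl i => add (f i) (mk κ g)
      | Sum.inr j => add (mk ι f) (g j)) := rfl

open Classical in
lemma typ_mk {ι} (f : ι → G3) :
    typ (mk ι f) =
    if ∃ i, typ (f i) = PType.P then PType.N
    else if Nonempty ι ∧ ∀ i, typ (f i) = PType.N then PType.O
    else if ∀ i, typ (f i) = PType.O then PType.P
    else PType.Q := by rw [typ]


lemma all_O_of_P {ι} {f : ι → G3} (h : typ (mk ι f) = PType.P) :
    ∀ i, typ (f i) = PType.O := by
  rw [typ_mk] at h
  split_ifs at h with h1 h2 h3 <;> first | exact h3 | simp at h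

lemma all_N_of_O {ι} {f : ι → G3} (h : typ (mk ι f) = PType.O) :
    ∀ i, typ (f i) = PType.N := by
  rw [typ_mk] at h
  split_ifs at h with h1 h2 h3 <;> first | exact h2.2 | simp at h

lemma N_of_exists_P {ι} {f : ι → G3} (h : ∃ i, typ (f i) = PType.P) :
    typ (mk ι f) = PType.N := by
  rw [typ_mk, if_pos h]

lemma O_of_all_N {ι} {f : ι → G3} (hne : Nonempty ι)
    (h : ∀ i, typ (f i) = PType.N) : typ (mk ι f) = PType.O := by
  rw [typ_mk]
  rw [if_neg, if_pos ⟨hne, h⟩]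
  rintro ⟨i, hi⟩
  rw [h i] at hi
  exact PType.noConfusion hi

lemma typ_of_isEmpty {ι} {f : ι → G3} (he : IsEmpty ι) : typ (mk ι f) = PType.P := by
  rw [typ_mk]
  rw [if_neg, if_neg, if_pos]
  · exact fun i => he.elim i
  · rintro ⟨⟨i⟩, -⟩
    exact he.elim i
  · rintro ⟨i, -⟩
    exact he.elim i

lemma typ_eq_Q {ι} {f : ι → G3} (h1 : ∀ i, typ (f i) ≠ PType.P)
    (h2 : ∃ i, typ (f i) ≠ PType.N) (h3 : ∃ i, typ (f i) ≠ PType.O) :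
    typ (mk ι f) = PType.Q := by
  obtain ⟨i2, hi2⟩ := h2
  obtain ⟨i3, hi3⟩ := h3
  rw [typ_mk]
  rw [if_neg, if_neg, if_neg]
  · exact fun h => hi3 (h i3)
  · rintro ⟨-, h⟩
    exact hi2 (h i2)
  · rintro ⟨i, hi⟩
    exact h1 i hi

lemma typ_eq_Q' {ι} {f : ι → G3} (h1 : ∀ i, typ (f i) ≠ PType.P)
    (h2 : ∃ i, typ (f i) = PType.Q) : typ (mk ι f) = PType.Q := by
  obtain ⟨i, hi⟩ := h2
  exact typ_eq_Q h1 ⟨i, ne_of_eq_of_ne hi (by decide)⟩ ⟨i, ne_of_eq_of_ne hi (by decide)⟩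

/-- Key lemma: if a game has options `f i` and `f j` such that `f i` is itself an
option of `f j`, then the game is not a `P`-game. -/
lemma key {ι} {f : ι → G3} (i j : ι) {κ} {g : κ → G3} (hj : f j = mk κ g) (k : κ)
    (hk : g k = f i) : typ (mk ι f) ≠ PType.P := by
  intro hP
  have hO := all_O_of_P hP
  have h1 := hO i
  have h2 := hO j
  rw [hj] at h2
  have h3 := all_N_of_O h2 k
  rw [hk, h1] at h3
  exact PType.noConfusion h3


/-- If the second summand has options `g k1` and `g k0` with `g k0` an option of
`g k1`, then `X + (second summand)` is not a `P`-game. -/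
lemma notP_right (X : G3) {κ} {g : κ → G3} (k0 k1 : κ) {κ'} {g' : κ' → G3}
    (h1 : g k1 = mk κ' g') (k' : κ') (h0 : g' k' = g k0) :
    typ (add X (mk κ g)) ≠ PType.P := by
  obtain ⟨ι, f⟩ := X
  rw [add_mk]
  exact key (Sum.inr k0) (Sum.inr k1)
    (show add (mk ι f) (g k1) = _ by rw [h1, add_mk]) (Sum.inr k')
    (show add (mk ι f) (g' k') = add (mk ι f) (g k0) by rw [h0])

lemma notP_left (X Y : G3) {κ} {g : κ → G3} (k0 k1 : κ) {κ'} {g' : κ' → G3}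
    (h1 : g k1 = mk κ' g') (k' : κ') (h0 : g' k' = g k0) :
    typ (add (add X (mk κ g)) Y) ≠ PType.P := by
  obtain ⟨ι, f⟩ := X
  obtain ⟨ι', f'⟩ := Y
  rw [add_mk, add_mk]
  exact key (Sum.inl (Sum.inr k0)) (Sum.inl (Sum.inr k1))
    (show add (add (mk ι f) (g k1)) (mk ι' f') = _ by rw [h1, add_mk, add_mk])
    (Sum.inl (Sum.inr k'))
    (show add (add (mk ι f) (g' k')) (mk ι' f') =
        add (add (mk ι f) (g k0)) (mk ι' f') by rw [h0])

lemma notP_nim_right (X : G3) {b : ℕ} (hb : 2 ≤ b) :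
    typ (add X (nim b)) ≠ PType.P := by
  rw [nim_def b]
  exact notP_right X (⟨0, by omega⟩ : Fin b) (⟨1, by omega⟩ : Fin b)
    (nim_def 1) (⟨0, Nat.one_pos⟩ : Fin 1) rfl

lemma notP_nim_left (X Y : G3) {a : ℕ} (ha : 2 ≤ a) :
    typ (add (add X (nim a)) Y) ≠ PType.P := by
  rw [nim_def a]
  exact notP_left X Y (⟨0, by omega⟩ : Fin a) (⟨1, by omega⟩ : Fin a)
    (nim_def 1) (⟨0, Nat.one_pos⟩ : Fin 1) rfl


lemma typ_of_isEmpty' (X : G3) (he : IsEmpty (moves X)) : typ X = PType.P := by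
  obtain ⟨ι, f⟩ := X
  exact typ_of_isEmpty he

lemma isEmpty_moves_nim0 : IsEmpty (moves (nim 0)) := by
  rw [nim_def]
  exact ⟨fun x => Fin.elim0 x⟩

lemma moves_add_isEmpty {X Y : G3} (hX : IsEmpty (moves X)) (hY : IsEmpty (moves Y)) :
    IsEmpty (moves (add X Y)) := by
  obtain ⟨ι, f⟩ := X
  obtain ⟨κ, g⟩ := Y
  rw [add_mk]
  exact ⟨fun x => x.casesOn hX.elim hY.elim⟩

lemma typP_add (X Y : G3) (hX : IsEmpty (moves X)) (hY : IsEmpty (moves Y)) :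
    typ (add X Y) = PType.P :=
  typ_of_isEmpty' _ (moves_add_isEmpty hX hY)

lemma isEmpty_moves_mk_fin0 {g : Fin 0 → G3} : IsEmpty (moves (mk (Fin 0) g)) :=
  ⟨fun x => Fin.elim0 x⟩


lemma N10 (X : G3) (he : IsEmpty (moves X)) :
    typ (add (add X (nim 1)) (nim 0)) = PType.N := by
  obtain ⟨ι, f⟩ := X
  rw [nim_def 1, nim_def 0, add_mk, add_mk]
  refine N_of_exists_P ⟨Sum.inl (Sum.inr ⟨0, Nat.one_pos⟩), ?_⟩
  exact typP_add _ _ (moves_add_isEmpty he isEmpty_moves_nim0) isEmpty_moves_mk_fin0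

lemma N01 (X : G3) (he : IsEmpty (moves X)) :
    typ (add (add X (nim 0)) (nim 1)) = PType.N := by
  obtain ⟨ι, f⟩ := X
  rw [nim_def 0, nim_def 1, add_mk, add_mk]
  refine N_of_exists_P ⟨Sum.inr ⟨0, Nat.one_pos⟩, ?_⟩
  exact typP_add _ _ (moves_add_isEmpty he isEmpty_moves_mk_fin0) isEmpty_moves_nim0

lemma N02 (X : G3) (he : IsEmpty (moves X)) :
    typ (add (add X (nim 0)) (nim 2)) = PType.N := by
  obtain ⟨ι, f⟩ := X
  rw [nim_def 0, nim_def 2, add_mk, add_mk]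
  refine N_of_exists_P ⟨Sum.inr ⟨0, by omega⟩, ?_⟩
  exact typP_add _ _ (moves_add_isEmpty he isEmpty_moves_mk_fin0) isEmpty_moves_nim0

lemma O11 (X : G3) (he : IsEmpty (moves X)) :
    typ (add (add X (nim 1)) (nim 1)) = PType.O := by
  obtain ⟨ι, f⟩ := X
  have h01 := N01 (mk ι f) he
  have h10 := N10 (mk ι f) he
  rw [nim_def 1] at h01 h10 ⊢
  rw [add_mk, add_mk]
  refine O_of_all_N ⟨Sum.inr ⟨0, Nat.one_pos⟩⟩ ?_
  rintro ((i | ⟨j, hj⟩) | ⟨k, hk⟩)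
  · exact he.elim i
  · obtain rfl : j = 0 := by omega
    exact h01
  · obtain rfl : k = 0 := by omega
    exact h10

lemma base_Q (X : G3) (he : IsEmpty (moves X)) :
    typ (add (add X (nim 1)) (nim 2)) = PType.Q := by
  obtain ⟨ι, f⟩ := X
  have h02 := N02 (mk ι f) he
  have h10 := N10 (mk ι f) he
  have h11 := O11 (mk ι f) he
  rw [nim_def 2] at h02 ⊢
  rw [nim_def 1] at h10 ⊢
  nth_rewrite 1 [nim_def 1] at h11
  rw [add_mk, add_mk]
  refine typ_eq_Q ?_ ⟨Sum.inr ⟨1, by omega⟩, ?_⟩ ⟨Sum.inr ⟨0, by omega⟩, ?_⟩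
  · rintro ((i | ⟨j, hj⟩) | ⟨k, hk⟩)
    · exact he.elim i
    · obtain rfl : j = 0 := by omega
      exact ne_of_eq_of_ne h02 (by decide)
    · interval_cases k
      · exact ne_of_eq_of_ne h10 (by decide)
      · exact ne_of_eq_of_ne h11 (by decide)
  · exact ne_of_eq_of_ne h11 (by decide)
  · exact ne_of_eq_of_ne h10 (by decide)


lemma main_aux_Q : ∀ (k : ℕ) (G : G3) (m n : ℕ), m + n ≤ k → 2 ≤ m → 2 ≤ n →
    typ (add (add G (nim m)) (nim n)) = PType.Q := by
  intro k
  induction k with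
  | zero => intro G m n h hm hn; omega
  | succ k IHk =>
    intro G m n hk hm hn
    induction G with
    | mk ι f IHG =>
      rw [nim_def m, nim_def n, add_mk, add_mk]
      refine typ_eq_Q' ?_ ?_
      case refine_2 =>
        by_cases hne : Nonempty ι
        · obtain ⟨i⟩ := hne
          refine ⟨Sum.inl (Sum.inl i), ?_⟩
          have h := IHG i
          rw [nim_def m, nim_def n] at h
          exact h
        · have he : IsEmpty ι := ⟨fun i => hne ⟨i⟩⟩
          by_cases h3 : 3 ≤ n
          · refine ⟨Sum.inr ⟨2, by omega⟩, ?_⟩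
            have h := IHk (mk ι f) m 2 (by omega) hm (by omega)
            rw [nim_def m] at h
            exact h
          · obtain rfl : n = 2 := by omega
            refine ⟨Sum.inl (Sum.inr ⟨1, by omega⟩), ?_⟩
            have h := base_Q (mk ι f) he
            rw [nim_def 2] at h
            exact h
      rintro ((i | ⟨j, hj⟩) | ⟨l, hl⟩)
      · exact notP_right _ (⟨0, by omega⟩ : Fin n) ⟨1, by omega⟩ (nim_def 1)
          (⟨0, Nat.one_pos⟩ : Fin 1) rfl
      · exact notP_right _ (⟨0, by omega⟩ : Fin n) ⟨1, by omega⟩ (nim_def 1)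
          (⟨0, Nat.one_pos⟩ : Fin 1) rfl
      · exact notP_left (mk ι f) (nim l) (⟨0, by omega⟩ : Fin m) ⟨1, by omega⟩
          (nim_def 1) (⟨0, Nat.one_pos⟩ : Fin 1) rfl

theorem add_two_big_heaps_Q (G : G3) (m n : ℕ) (hm : 2 ≤ m) (hn : 2 ≤ n) :
    typ (add (add G (nim m)) (nim n)) = PType.Q :=
  main_aux_Q (m + n) G m n le_rfl hm hn

end G3
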